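/- Let ω ∈ ℝ^k, let T₀ be the closure in G of {E'(tω/r) : t ∈ ℝ}, and set K := {u ∈ (ℤ/rℤ)^k : (γ̄^u)^{-1}·E'(u/r) ∈ T₀}. Then K is a subgroup of (ℤ/rℤ)^k, it is exactly the subgroup of those deck transformations Ψ_u(α, g) = (α + u/r, g·(γ̄^u)^{-1}·E'(u/r)) of the covering j' that map T^k × T₀ to itself, and for every g ∈ G the restriction of j' identifies P'_{g·m̄} := j'(T^k × gT₀) with the quotient of T^k × gT₀ by the induced action of K. -/

import Mathlib

open scoped Manifold
open Function Set Topology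

noncomputable section

/-- The standard `n`-torus `Tⁿ = ℝⁿ/ℤⁿ`. -/
abbrev Torus (n : ℕ) : Type := Fin n → AddCircle (1 : ℝ)

/-- The canonical projection `ℝⁿ → Tⁿ`. -/
def toTorus {n : ℕ} (x : Fin n → ℝ) : Torus n := fun i => (x i : AddCircle (1 : ℝ))

/-- A vector in `ℝⁿ` is nonresonant if its components are linearly independent over `ℤ`
(equivalently, over `ℚ`). -/
def Nonresonant {n : ℕ} (ω : Fin n → ℝ) : Prop :=
  ∀ p : Fin n → ℤ, (∑ i, (p i : ℝ) * ω i) = 0 → p = 0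

variable {k : ℕ}
  -- `G` is a compact connected Lie group …
  {EG : Type*} [NormedAddCommGroup EG] [NormedSpace ℝ EG] [FiniteDimensional ℝ EG]
  {HG : Type*} [TopologicalSpace HG] {IG : ModelWithCorners ℝ EG HG}
  {G : Type*} [TopologicalSpace G] [ChartedSpace HG G] [Group G] [IsTopologicalGroup G]
  [LieGroup IG (⊤ : ℕ∞) G] [CompactSpace G] [ConnectedSpace G]
  -- … acting smoothly and freely on a compact smooth manifold `F`
  {EF : Type*} [NormedAddCommGroup EF] [NormedSpace ℝ EF]
  {HF : Type*} [TopologicalSpace HF] {IF : ModelWithCorners ℝ EF HF}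
  {F : Type*} [TopologicalSpace F] [ChartedSpace HF F] [IsManifold IF (⊤ : ℕ∞) F]
  [CompactSpace F] [MulAction G F] [ContinuousSMul G F]

/-- The ordered product `γ₁^{u₁} ⋯ γ_k^{u_k}` (written `γ̄ᵘ` in the paper; the `γᵢ`
commute pairwise, so the order is immaterial). -/
def prodPow {G : Type*} [Monoid G] {k : ℕ} (γ : Fin k → G) (u : Fin k → ℕ) : G :=
  (List.ofFn fun i => γ i ^ u i).prod

/-- The ordered product `γ₁^{u₁} ⋯ γ_k^{u_k}` for integer exponents. -/
def prodZPow {G : Type*} [Group G] {k : ℕ} (γ : Fin k → G) (u : Fin k → ℤ) : G :=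
  (List.ofFn fun i => γ i ^ u i).prod


/-!
Inside the abelian group `A`, `d(u) = (γ̄ᵘ)⁻¹ E'(u/r)` is a homomorphism `ℤᵏ → A`; since
`E'(eᵢ) = γ̄ᵢʳ` it kills `rℤᵏ` and descends to `(ℤ/rℤ)ᵏ`, and `Ψ_u` acts on the `G`-factor by
right multiplication by `d(u)`. As the closure of a one-parameter subgroup, `T₀` is a subgroup,
so `K = d⁻¹(T₀)` is a subgroup, `Ψ_u` preserves `Tᵏ × T₀` iff `d(u) ∈ T₀`, and two points
`(θ, gh)`, `(θ', gh')` of `Tᵏ × gT₀` in one fibre of `ĵ` differ by a `Ψ_u` with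
`d(u) = h⁻¹h' ∈ T₀`.
-/

lemma toTorus_surjective {n : ℕ} : Surjective (toTorus (n := n)) := fun θ =>
  ⟨fun i => (θ i).out, funext fun i => QuotientAddGroup.out_eq' (θ i)⟩

lemma toTorus_add {n : ℕ} (x y : Fin n → ℝ) : toTorus (x + y) = toTorus x + toTorus y := by
  funext i
  exact AddCircle.coe_add _ _ _

lemma eq_prodMap_of_toTorus {G : Type*} [Mul G] {Ψ : Torus k × G → Torus k × G}
    {c : Fin k → ℝ} {d : G} (hΨ : ∀ α g, Ψ (toTorus α, g) = (toTorus (α + c), g * d)) :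
    Ψ = Prod.map (· + toTorus c) (· * d) := by
  ext ⟨θ, g⟩ : 1
  obtain ⟨α, rfl⟩ := toTorus_surjective θ
  rw [hΨ, Prod.map_apply, toTorus_add]

lemma image_univ_prod_image_eq {X Y Z : Type*} {f : Torus k × Y → Z} {j : (Fin k → ℝ) → Y → Z}
    (hf : ∀ α y, f (toTorus α, y) = j α y) (φ : X → Y) (T : Set X) :
    f '' (univ ×ˢ (φ '' T)) = {z | ∃ (α : Fin k → ℝ) (x : X), x ∈ T ∧ z = j α (φ x)} := by
  ext z
  constructor
  · rintro ⟨⟨θ, _⟩, ⟨-, x, hx, rfl⟩, rfl⟩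
    obtain ⟨α, rfl⟩ := toTorus_surjective θ
    exact ⟨α, x, hx, hf α (φ x)⟩
  · rintro ⟨α, x, hx, rfl⟩
    exact ⟨(toTorus α, φ x), ⟨mem_univ _, x, hx, rfl⟩, hf α (φ x)⟩

lemma exists_subgroup_coe_eq_closure_range {V G : Type*} [AddGroup V] [Group G]
    [TopologicalSpace G] [IsTopologicalGroup G] (f : V → G) (hf : ∀ x y, f (x + y) = f x * f y) :
    ∃ H : Subgroup G, (H : Set G) = closure (range f) :=
  ⟨(MonoidHom.mk' (fun x : Multiplicative V => f x.toAdd)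
      fun x y => hf x.toAdd y.toAdd).range.topologicalClosure,
    by rw [Subgroup.topologicalClosure_coe, MonoidHom.coe_range]; rfl⟩

lemma exists_addSubgroup_coe_eq_preimage {M G : Type*} [AddGroup M] [Group G] (f : M → G)
    (hf : ∀ a b, f (a + b) = f a * f b) (H : Subgroup G) :
    ∃ K : AddSubgroup M, (K : Set M) = f ⁻¹' H :=
  ⟨(Subgroup.toAddSubgroup H).comap (AddMonoidHom.mk' (fun a => Additive.ofMul (f a)) hf), rfl⟩

lemma image_prodMap_univ_prod_mul_right_eq_iff {X G : Type*} [Nonempty X] [Group G] {τ : X → X}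
    (hτ : Surjective τ) (H : Subgroup G) (d : G) :
    Prod.map τ (· * d) '' (univ ×ˢ (H : Set G)) = univ ×ˢ (H : Set G) ↔ d ∈ H := by
  rw [prodMap_image_prod, image_univ_of_surjective hτ,
    prod_eq_prod_iff_of_nonempty (univ_nonempty.prod (Nonempty.image _ ⟨1, H.one_mem⟩))]
  refine ⟨fun h => ?_, fun hd => ⟨rfl, ?_⟩⟩
  · simpa using h.2.subset (mem_image_of_mem _ H.one_mem)
  · ext g
    refine ⟨?_, fun hg => ⟨g * d⁻¹, H.mul_mem hg (H.inv_mem hd), inv_mul_cancel_right g d⟩⟩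
    rintro ⟨h, hh, rfl⟩
    exact H.mul_mem hh hd

lemma mem_of_mul_eq_of_mem_image_mul_left {G : Type*} [Group G] {H : Subgroup G} {g a b d : G}
    (ha : a ∈ (g * ·) '' (H : Set G)) (hb : b ∈ (g * ·) '' (H : Set G)) (habd : a * d = b) :
    d ∈ H := by
  obtain ⟨h, hh, rfl⟩ := ha
  obtain ⟨h', hh', rfl⟩ := hb
  rw [mul_assoc, mul_left_cancel_iff] at habd
  rw [← inv_mul_cancel_left h d, habd]
  exact H.mul_mem (H.inv_mem hh) hh'

lemma prodPow_eq_prodZPow_natCast {G : Type*} [Group G] (γ : Fin k → G) (n : Fin k → ℕ) :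
    prodPow γ n = prodZPow γ fun i => n i := by
  simp only [prodPow, prodZPow, zpow_natCast]

lemma prodZPow_map {C G : Type*} [CommGroup C] [Group G] (f : C →* G) (γ : Fin k → C)
    (u : Fin k → ℤ) : prodZPow (fun i => f (γ i)) u = f (∏ i, γ i ^ u i) := by
  simp only [prodZPow, ← List.prod_ofFn, map_list_prod, List.map_ofFn, Function.comp_def,
    map_zpow]

section DeckPhase

variable {C : Type*} [CommGroup C] (γ : Fin k → C) (E : (Fin k → ℝ) → C) (r : ℕ)

/-- The `G`-component `(γ̄ᵘ)⁻¹ E'(u/r)` of the deck transformation `Ψ_u`. -/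
def deckPhase (u : Fin k → ℤ) : C := (∏ i, γ i ^ u i)⁻¹ * E fun i => u i / r

def zmodDeckPhase (u : Fin k → ZMod r) : C := deckPhase γ E r fun i => ((u i).val : ℤ)

variable {γ E r}

lemma map_intCast_eq_prod_zpow (hE : ∀ x y, E (x + y) = E x * E y) (w : Fin k → ℤ) :
    E (fun i => (w i : ℝ)) = ∏ i, E (Pi.single i 1) ^ w i := by
  let φ : (Fin k → ℝ) →+ Additive C := AddMonoidHom.mk' (fun x => Additive.ofMul (E x)) hE
  have hw : (fun i => (w i : ℝ)) = ∑ i, w i • Pi.single i (1 : ℝ) := by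
    simp_rw [← Pi.single_smul, zsmul_eq_mul, mul_one]
    exact (Finset.univ_sum_single _).symm
  calc E (fun i => (w i : ℝ)) = (φ (fun i => (w i : ℝ))).toMul := rfl
    _ = ∏ i, E (Pi.single i 1) ^ w i := by
      rw [hw, map_sum]
      simp_rw [map_zsmul]
      rfl

lemma deckPhase_add (hE : ∀ x y, E (x + y) = E x * E y) (u v : Fin k → ℤ) :
    deckPhase γ E r (u + v) = deckPhase γ E r u * deckPhase γ E r v := by
  have harg : (fun i => ((u + v) i : ℝ) / r) =
      (fun i => (u i : ℝ) / r) + fun i => (v i : ℝ) / r := by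
    funext i; simp [add_div]
  rw [deckPhase, harg, hE]
  simp only [Pi.add_apply, zpow_add, Finset.prod_mul_distrib, mul_inv]
  exact mul_mul_mul_comm _ _ _ _

lemma deckPhase_natCast_mul_eq_one (hE : ∀ x y, E (x + y) = E x * E y)
    (hEγ : ∀ i, E (Pi.single i 1) = γ i ^ r) (hr : r ≠ 0) (w : Fin k → ℤ) :
    deckPhase γ E r (fun i => r * w i) = 1 := by
  have harg : (fun i => (((r * w i : ℤ)) : ℝ) / r) = fun i => (w i : ℝ) := by
    funext i; push_cast; field_simp
  simp only [deckPhase, harg, map_intCast_eq_prod_zpow hE, hEγ, ← zpow_natCast, ← zpow_mul,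
    inv_mul_cancel]

lemma deckPhase_eq_of_intCast_eq (hE : ∀ x y, E (x + y) = E x * E y)
    (hEγ : ∀ i, E (Pi.single i 1) = γ i ^ r) (hr : r ≠ 0) {u v : Fin k → ℤ}
    (huv : ∀ i, (u i : ZMod r) = v i) : deckPhase γ E r u = deckPhase γ E r v := by
  choose w hw using fun i => (ZMod.intCast_eq_intCast_iff_dvd_sub (u i) (v i) r).mp (huv i)
  have hv : v = u + fun i => r * w i := by
    funext i; simp only [Pi.add_apply, ← hw]; ring
  rw [hv, deckPhase_add hE, deckPhase_natCast_mul_eq_one hE hEγ hr, mul_one]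

lemma zmodDeckPhase_add [NeZero r] (hE : ∀ x y, E (x + y) = E x * E y)
    (hEγ : ∀ i, E (Pi.single i 1) = γ i ^ r) (u v : Fin k → ZMod r) :
    zmodDeckPhase γ E r (u + v) = zmodDeckPhase γ E r u * zmodDeckPhase γ E r v := by
  rw [zmodDeckPhase, zmodDeckPhase, zmodDeckPhase, ← deckPhase_add hE]
  exact deckPhase_eq_of_intCast_eq hE hEγ (NeZero.ne r) fun i => by simp

end DeckPhase

lemma exists_zmod_hom_eq_prodZPow_inv_mul {G : Type*} [Group G] (A : Subgroup G)
    (hA : ∀ a ∈ A, ∀ b ∈ A, a * b = b * a) {γ : Fin k → G} (hγA : ∀ i, γ i ∈ A)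
    {E : (Fin k → ℝ) → G} (hE : ∀ x y, E (x + y) = E x * E y) (hEA : ∀ x, E x ∈ A)
    (r : ℕ) [NeZero r] (hEγ : ∀ i, E (Pi.single i 1) = γ i ^ r) :
    ∃ d : (Fin k → ZMod r) → G, (∀ u v, d (u + v) = d u * d v) ∧
      ∀ u, d u = (prodZPow γ fun i => ((u i).val : ℤ))⁻¹ * E fun i => ((u i).val : ℝ) / r := by
  let : CommGroup A := { A.toGroup with mul_comm := fun a b => Subtype.ext (hA a a.2 b b.2) }
  let γA : Fin k → A := fun i => ⟨γ i, hγA i⟩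
  let EA : (Fin k → ℝ) → A := fun x => ⟨E x, hEA x⟩
  have hEA_add : ∀ x y, EA (x + y) = EA x * EA y := fun x y => Subtype.ext (hE x y)
  have hEAγ : ∀ i, EA (Pi.single i 1) = γA i ^ r := fun i => Subtype.ext (hEγ i)
  refine ⟨fun u => (zmodDeckPhase γA EA r u : A), fun u v => ?_, fun u => ?_⟩
  · simp only [zmodDeckPhase_add hEA_add hEAγ, Subgroup.coe_mul]
  · simp only [zmodDeckPhase, deckPhase, Subgroup.coe_mul, Subgroup.coe_inv, Int.cast_natCast]
    rw [← A.coe_subtype, ← prodZPow_map]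
    rfl

theorem subgroup_K_and_quotient_description_of_petals_general
    -- a fixed point `m̄` and the phases `γ̄ᵢ` of the lifts at `m̄`
    (γbar : Fin k → G)
    -- a positive integer `r` and an abelian subgroup `A` of `G` containing the `γ̄ᵢ`
    (r : ℕ) (hr : 0 < r)
    (A : Subgroup G) (hAab : ∀ a ∈ A, ∀ b ∈ A, a * b = b * a)
    (hγA : ∀ i, γbar i ∈ A)
    -- `E' : ℝᵏ → G` is a smooth homomorphism with image in `A` and `E' eᵢ = γ̄ᵢʳ`
    (E' : (Fin k → ℝ) → G)
    (hE'add : ∀ x y, E' (x + y) = E' x * E' y)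
    (hE'A : ∀ x, E' x ∈ A)
    (hE'γ : ∀ i, E' (Pi.single i 1) = γbar i ^ r)
    -- the map `j' (α, g) = g • E'(α)⁻¹ • Φ_{rα} m̄`
    (j' : (Fin k → ℝ) → G → F)
    -- `j'` descends to a smooth covering map `ĵ : Tᵏ × G → F`
    (jhat : Torus k × G → F)
    (hjhat : ∀ (α : Fin k → ℝ) (g : G), jhat (toTorus α, g) = j' α g)
    -- the deck action `Ψ` of `(ℤ/rℤ)ᵏ` (cf. Lemma 7)
    (Ψ : (Fin k → ZMod r) → Torus k × G → Torus k × G)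
    (hΨ : ∀ (u : Fin k → ℤ) (α : Fin k → ℝ) (g : G),
      Ψ (fun i => (u i : ZMod r)) (toTorus α, g) =
        (toTorus (α + fun i => (u i : ℝ) / r),
         g * (prodZPow γbar u)⁻¹ * E' fun i => (u i : ℝ) / r))
    (hΨorbits : ∀ x y, jhat x = jhat y ↔ ∃ u, Ψ u x = y)
    (ω : Fin k → ℝ)
    (T₀ : Set G) (hT₀ : T₀ = closure {g : G | ∃ t : ℝ, g = E' ((r : ℝ)⁻¹ • t • ω)})
    -- the set `K`
    (K : Set (Fin k → ZMod r))
    (hK : K = {u : Fin k → ZMod r |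
      (prodPow γbar fun i => (u i).val)⁻¹ * E' (fun i => ((u i).val : ℝ) / r) ∈ T₀}) :
    -- `K` is a subgroup of `(ℤ/rℤ)ᵏ`
    (∃ Ksub : AddSubgroup (Fin k → ZMod r), (Ksub : Set (Fin k → ZMod r)) = K) ∧
    -- `K` is exactly the set of deck transformations mapping `Tᵏ × T₀` to itself
    (K = {u : Fin k → ZMod r |
      Ψ u '' ((Set.univ : Set (Torus k)) ×ˢ T₀) = (Set.univ : Set (Torus k)) ×ˢ T₀}) ∧
    -- `ĵ` identifies `P'_{g·m̄}` with the quotient of `Tᵏ × gT₀` by the action of `K`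
    ∀ g : G,
      (jhat '' ((Set.univ : Set (Torus k)) ×ˢ ((g * ·) '' T₀)) =
        {y : F | ∃ (α : Fin k → ℝ) (h : G), h ∈ T₀ ∧ y = j' α (g * h)}) ∧
      ∀ x ∈ (Set.univ : Set (Torus k)) ×ˢ ((g * ·) '' T₀),
        ∀ y ∈ (Set.univ : Set (Torus k)) ×ˢ ((g * ·) '' T₀),
          (jhat x = jhat y ↔ ∃ u ∈ K, Ψ u x = y) := by
  have : NeZero r := ⟨hr.ne'⟩
  obtain ⟨d, hd_add, hd⟩ := exists_zmod_hom_eq_prodZPow_inv_mul A hAab hγA hE'add hE'A r hE'γ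
  have hKd : K = d ⁻¹' T₀ := by
    ext u
    rw [hK, mem_ofPred_eq, mem_preimage, hd, prodPow_eq_prodZPow_natCast]
  have hΨd : ∀ u, Ψ u = Prod.map (· + toTorus fun i => ((u i).val : ℝ) / r) (· * d u) :=
    fun u => eq_prodMap_of_toTorus fun α g => by
      simpa [hd, mul_assoc] using hΨ (fun i => (u i).val) α g
  obtain ⟨T, hT⟩ := exists_subgroup_coe_eq_closure_range (fun t : ℝ => E' ((r : ℝ)⁻¹ • t • ω))
    fun s t => by rw [add_smul, smul_add, hE'add]
  obtain rfl : T₀ = T := by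
    rw [hT₀, hT]; congr 1; ext g; exact exists_congr fun t => eq_comm
  refine ⟨?_, ?_, fun g => ⟨image_univ_prod_image_eq hjhat _ _, fun x hx y hy => ?_⟩⟩
  · obtain ⟨Ksub, hKsub⟩ := exists_addSubgroup_coe_eq_preimage d hd_add T
    exact ⟨Ksub, hKsub.trans hKd.symm⟩
  · ext u
    rw [hKd, mem_preimage, mem_ofPred_eq, hΨd]
    exact (image_prodMap_univ_prod_mul_right_eq_iff (add_right_surjective _) T (d u)).symm
  · refine ⟨fun hxy => ?_, fun ⟨u, _, hu⟩ => (hΨorbits x y).2 ⟨u, hu⟩⟩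
    obtain ⟨u, hu⟩ := (hΨorbits x y).1 hxy
    refine ⟨u, hKd ▸ ?_, hu⟩
    rw [hΨd] at hu
    exact mem_of_mul_eq_of_mem_image_mul_left hx.2 hy.2 (congrArg Prod.snd hu)

/-- **Lemma 8**: with `T₀` the closure of `{E'(tω/r)}`, the set
`K = {u ∈ (ℤ/rℤ)ᵏ : (γ̄ᵘ)⁻¹·E'(u/r) ∈ T₀}` is a subgroup of `(ℤ/rℤ)ᵏ`; it consists exactly
of the deck transformations `Ψ_u` preserving `Tᵏ × T₀`, and for every `g ∈ G` the restriction
of `ĵ` identifies `P'_{g·m̄} = ĵ(Tᵏ × gT₀)` with the quotient of `Tᵏ × gT₀` by `K`. -/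
theorem subgroup_K_and_quotient_description_of_petals
    (hk : 1 ≤ k)
    -- the action of `G` on `F` is smooth and free
    (hactsmooth : ContMDiff (IG.prod IF) IF (⊤ : ℕ∞) fun p : G × F => p.1 • p.2)
    (hfree : ∀ (g : G) (m : F), g • m = m → g = 1)
    -- `Φ` is a smooth action of `(ℝᵏ, +)` on `F` commuting with the `G`-action
    (Φ : (Fin k → ℝ) → F → F)
    (hΦsmooth : ContMDiff ((𝓘(ℝ, Fin k → ℝ)).prod IF) IF (⊤ : ℕ∞) fun p : (Fin k → ℝ) × F => Φ p.1 p.2)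
    (hΦzero : ∀ m, Φ 0 m = m)
    (hΦadd : ∀ (x y : Fin k → ℝ) (m : F), Φ (x + y) m = Φ x (Φ y m))
    (hΦequiv : ∀ (x : Fin k → ℝ) (g : G) (m : F), Φ x (g • m) = g • Φ x m)
    -- (a) `Φ x m` is in the `G`-orbit of `m` iff `x ∈ ℤᵏ`
    (hperiod : ∀ (m : F) (x : Fin k → ℝ),
      (∃ g : G, Φ x m = g • m) ↔ ∃ z : Fin k → ℤ, x = fun i => (z i : ℝ))
    -- (b) any two points of `F` are joined by the flow up to the `G`-action
    (htrans : ∀ m m' : F, ∃ (x : Fin k → ℝ) (g : G), Φ x m = g • m')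
    -- a fixed point `m̄` and the phases `γ̄ᵢ` of the lifts at `m̄`
    (mbar : F) (γbar : Fin k → G)
    (hγbar : ∀ i, Φ (Pi.single i 1) mbar = γbar i • mbar)
    -- a positive integer `r` and an abelian subgroup `A` of `G` containing the `γ̄ᵢ`
    (r : ℕ) (hr : 0 < r)
    (A : Subgroup G) (hAab : ∀ a ∈ A, ∀ b ∈ A, a * b = b * a)
    (hγA : ∀ i, γbar i ∈ A)
    -- `E' : ℝᵏ → G` is a smooth homomorphism with image in `A` and `E' eᵢ = γ̄ᵢʳ`
    (E' : (Fin k → ℝ) → G)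
    (hE'0 : E' 0 = 1)
    (hE'add : ∀ x y, E' (x + y) = E' x * E' y)
    (hE'smooth : ContMDiff (𝓘(ℝ, Fin k → ℝ)) IG (⊤ : ℕ∞) E')
    (hE'A : ∀ x, E' x ∈ A)
    (hE'γ : ∀ i, E' (Pi.single i 1) = γbar i ^ r)
    -- the map `j' (α, g) = g • E'(α)⁻¹ • Φ_{rα} m̄`
    (j' : (Fin k → ℝ) → G → F)
    (hj' : ∀ (α : Fin k → ℝ) (g : G), j' α g = g • (E' α)⁻¹ • Φ ((r : ℝ) • α) mbar)
    -- `j'` descends to a smooth covering map `ĵ : Tᵏ × G → F`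
    (jhat : Torus k × G → F)
    (hjhat : ∀ (α : Fin k → ℝ) (g : G), jhat (toTorus α, g) = j' α g)
    (hjhatcov : IsCoveringMap jhat)
    -- the deck action `Ψ` of `(ℤ/rℤ)ᵏ` (cf. Lemma 7)
    (Ψ : (Fin k → ZMod r) → Torus k × G → Torus k × G)
    (hΨ : ∀ (u : Fin k → ℤ) (α : Fin k → ℝ) (g : G),
      Ψ (fun i => (u i : ZMod r)) (toTorus α, g) =
        (toTorus (α + fun i => (u i : ℝ) / r),
         g * (prodZPow γbar u)⁻¹ * E' fun i => (u i : ℝ) / r))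
    (hΨ0 : ∀ x, Ψ 0 x = x)
    (hΨadd : ∀ u v x, Ψ (u + v) x = Ψ u (Ψ v x))
    (hΨdeck : ∀ u x, jhat (Ψ u x) = jhat x)
    (hΨorbits : ∀ x y, jhat x = jhat y ↔ ∃ u, Ψ u x = y)
    (ω : Fin k → ℝ)
    (T₀ : Set G) (hT₀ : T₀ = closure {g : G | ∃ t : ℝ, g = E' ((r : ℝ)⁻¹ • t • ω)})
    -- the set `K`
    (K : Set (Fin k → ZMod r))
    (hK : K = {u : Fin k → ZMod r |
      (prodPow γbar fun i => (u i).val)⁻¹ * E' (fun i => ((u i).val : ℝ) / r) ∈ T₀}) :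
    -- `K` is a subgroup of `(ℤ/rℤ)ᵏ`
    (∃ Ksub : AddSubgroup (Fin k → ZMod r), (Ksub : Set (Fin k → ZMod r)) = K) ∧
    -- `K` is exactly the set of deck transformations mapping `Tᵏ × T₀` to itself
    (K = {u : Fin k → ZMod r |
      Ψ u '' ((Set.univ : Set (Torus k)) ×ˢ T₀) = (Set.univ : Set (Torus k)) ×ˢ T₀}) ∧
    -- `ĵ` identifies `P'_{g·m̄}` with the quotient of `Tᵏ × gT₀` by the action of `K`
    ∀ g : G,
      (jhat '' ((Set.univ : Set (Torus k)) ×ˢ ((g * ·) '' T₀)) =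
        {y : F | ∃ (α : Fin k → ℝ) (h : G), h ∈ T₀ ∧ y = j' α (g * h)}) ∧
      ∀ x ∈ (Set.univ : Set (Torus k)) ×ˢ ((g * ·) '' T₀),
        ∀ y ∈ (Set.univ : Set (Torus k)) ×ˢ ((g * ·) '' T₀),
          (jhat x = jhat y ↔ ∃ u ∈ K, Ψ u x = y) :=
  subgroup_K_and_quotient_description_of_petals_general γbar r hr A hAab hγA E' hE'add hE'A hE'γ j'
    jhat hjhat Ψ hΨ hΨorbits ω T₀ hT₀ K hK
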